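/- arXiv:2004.06788 — 2 statements merged into one kernel-verified Lean document; each statement's English description precedes it below -/
import Mathlib

section
/- Let k ≥ 1 and let X be a k-colorable graph that contains a clique on k−1 vertices. Then the k-coloring complex B(X) is k-colorable. -/
open SimpleGraph

/-- A `k`-coloring of a graph `X`: a partition of the vertex set into `k`
(possibly empty) independent sets, the color classes of the coloring. -/
def IsColoring {V : Type*} (k : ℕ) (X : SimpleGraph V) (c : Fin k → Set V) : Prop :=
  (∀ v : V, ∃! i : Fin k, v ∈ c i) ∧
  ∀ i : Fin k, ∀ u ∈ c i, ∀ w ∈ c i, ¬ X.Adj u w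

/-- `S` occurs as a color class in some `k`-coloring of `X`. -/
def IsColorClass {V : Type*} (k : ℕ) (X : SimpleGraph V) (S : Set V) : Prop :=
  ∃ c : Fin k → Set V, IsColoring k X c ∧ ∃ i, c i = S

/-- The `k`-coloring complex `B(X)`: vertices are the color classes of
`k`-colorings of `X`, two of them adjacent if they occur together in some
`k`-coloring of `X`. -/
def ColoringComplex {V : Type*} (k : ℕ) (X : SimpleGraph V) :
    SimpleGraph {S : Set V // IsColorClass k X S} where
  Adj C D := C ≠ D ∧ ∃ c : Fin k → Set V,
    IsColoring k X c ∧ (∃ i, c i = C.1) ∧ (∃ j, c j = D.1)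
  symm := by
    constructor
    rintro C D ⟨hne, c, hc, hi, hj⟩
    exact ⟨hne.symm, c, hc, hj, hi⟩
  loopless := by constructor; rintro C ⟨hne, -⟩; exact hne rfl

/-- The canonical map `φ_X`, sending a vertex `v` to the set of all color
classes containing `v`. -/
def phi {V : Type*} (k : ℕ) (X : SimpleGraph V) (v : V) :
    Set {S : Set V // IsColorClass k X S} :=
  {C | v ∈ C.1}

/-- `X` is reflexive for `k`-colorings: the canonical map `φ_X` is a graph
isomorphism from `X` onto `B²(X) = B(B(X))`. -/
def IsReflexive {V : Type*} (k : ℕ) (X : SimpleGraph V) : Prop :=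
  ∃ f : X ≃g ColoringComplex k (ColoringComplex k X),
    ∀ v : V, (f v : {T // IsColorClass k (ColoringComplex k X) T}).1 = phi k X v

/-- `X` is colorful for `k`-colorings: any two distinct vertices lie in
different color classes of some `k`-coloring of `X`. -/
def Colorful {V : Type*} (k : ℕ) (X : SimpleGraph V) : Prop :=
  ∀ x y : V, x ≠ y → ∃ c : Fin k → Set V, IsColoring k X c ∧
    ∃ i j : Fin k, i ≠ j ∧ x ∈ c i ∧ y ∈ c j

/-!
Color a color class `C` of `X` by the clique vertex it contains, if any (it contains at most one),
and by one extra color otherwise. Adjacent classes are disjoint, so they cannot share a clique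
vertex; and they cannot both miss the clique `s`, since the `k - 1` vertices of `s` lie in distinct
classes of the coloring, leaving room for only one class without a clique vertex.
-/

section

variable {V : Type*} {k : ℕ} {X : SimpleGraph V}

theorem SimpleGraph.Coloring.mem_image_or_mem_image_of_isClique {α : Type*} [Fintype α]
    [DecidableEq α] (C : X.Coloring α) {s : Finset V} (hs : X.IsClique (s : Set V))
    (hcard : Fintype.card α ≤ s.card + 1) {a b : α} (hab : a ≠ b) :
    a ∈ s.image C ∨ b ∈ s.image C := by
  by_contra! h
  have hinj : (s.image C).card = s.card :=
    Finset.card_image_of_injOn fun v hv w hw hvw => by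
      by_contra hne
      exact C.valid (hs hv hw hne) hvw
  have hsub : s.image C ⊆ (Finset.univ.erase a).erase b := fun x hx =>
    Finset.mem_erase.2 ⟨fun hxb => h.2 (hxb ▸ hx),
      Finset.mem_erase.2 ⟨fun hxa => h.1 (hxa ▸ hx), Finset.mem_univ x⟩⟩
  have hle := Finset.card_le_card hsub
  rw [hinj, Finset.card_erase_of_mem (Finset.mem_erase.2 ⟨hab.symm, Finset.mem_univ b⟩),
    Finset.card_erase_of_mem (Finset.mem_univ a), Finset.card_univ] at hle
  have : 2 ≤ Fintype.card α := Fintype.one_lt_card_iff.2 ⟨a, b, hab⟩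
  omega

namespace IsColoring

variable {c : Fin k → Set V}

theorem eq_of_mem (hc : IsColoring k X c) {v : V} {i j : Fin k} (hi : v ∈ c i) (hj : v ∈ c j) :
    i = j :=
  (hc.1 v).unique hi hj

noncomputable def toColoring (hc : IsColoring k X c) : X.Coloring (Fin k) :=
  Coloring.mk (fun v => (hc.1 v).exists.choose) fun {v w} hvw hcol =>
    hc.2 _ v (hc.1 v).exists.choose_spec w (hcol ▸ (hc.1 w).exists.choose_spec) hvw

theorem mem_toColoring (hc : IsColoring k X c) (v : V) : v ∈ c (hc.toColoring v) :=
  (hc.1 v).exists.choose_spec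

end IsColoring

theorem SimpleGraph.Colorable.exists_isColoring (h : X.Colorable k) :
    ∃ c : Fin k → Set V, IsColoring k X c := by
  obtain ⟨C⟩ := h
  exact ⟨fun i => C ⁻¹' {i}, fun v => ⟨C v, rfl, fun _ hj => hj.symm⟩,
    fun _ _ hu _ hw hadj => C.valid hadj (hu.trans hw.symm)⟩

namespace ColoringComplex

variable {C D : {S : Set V // IsColorClass k X S}}

theorem disjoint_of_adj (h : (ColoringComplex k X).Adj C D) : Disjoint C.1 D.1 := by
  obtain ⟨hne, c, hc, ⟨i, hi⟩, ⟨j, hj⟩⟩ := h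
  refine Set.disjoint_left.2 fun v hvC hvD => hne (Subtype.ext ?_)
  rw [← hi] at hvC
  rw [← hj] at hvD
  rw [← hi, ← hj, hc.eq_of_mem hvC hvD]

theorem exists_mem_clique_of_adj {s : Finset V} (hs : X.IsClique (s : Set V))
    (hcard : k ≤ s.card + 1) (h : (ColoringComplex k X).Adj C D) :
    (∃ v ∈ s, v ∈ C.1) ∨ ∃ v ∈ s, v ∈ D.1 := by
  obtain ⟨hne, c, hc, ⟨i, hi⟩, ⟨j, hj⟩⟩ := h
  have hij : i ≠ j := fun hij => hne (Subtype.ext (hi.symm.trans (hij ▸ hj)))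
  have hcard' : Fintype.card (Fin k) ≤ s.card + 1 := by rwa [Fintype.card_fin]
  rcases hc.toColoring.mem_image_or_mem_image_of_isClique hs hcard' hij with hi' | hj'
  · obtain ⟨v, hv, rfl⟩ := Finset.mem_image.1 hi'
    exact Or.inl ⟨v, hv, hi ▸ hc.mem_toColoring v⟩
  · obtain ⟨v, hv, rfl⟩ := Finset.mem_image.1 hj'
    exact Or.inr ⟨v, hv, hj ▸ hc.mem_toColoring v⟩

open Classical in
noncomputable def cliqueColoring {s : Finset V} (hs : X.IsClique (s : Set V))
    (hcard : k ≤ s.card + 1) : (ColoringComplex k X).Coloring (Option s) :=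
  Coloring.mk (fun C => if h : ∃ v ∈ s, v ∈ C.1 then some ⟨h.choose, h.choose_spec.1⟩ else none)
    fun {C D} hCD hCD' => by
      by_cases hC : ∃ v ∈ s, v ∈ C.1
      · by_cases hD : ∃ v ∈ s, v ∈ D.1
        · rw [dif_pos hC, dif_pos hD, Option.some_inj, Subtype.mk.injEq] at hCD'
          exact Set.disjoint_left.1 (disjoint_of_adj hCD) hC.choose_spec.2
            (hCD' ▸ hD.choose_spec.2)
        · rw [dif_pos hC, dif_neg hD] at hCD'
          exact Option.some_ne_none _ hCD'
      · rw [dif_neg hC] at hCD'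
        have hD : ∃ v ∈ s, v ∈ D.1 := (exists_mem_clique_of_adj hs hcard hCD).resolve_left hC
        rw [dif_pos hD] at hCD'
        exact Option.some_ne_none _ hCD'.symm

theorem colorable_card_add_one {s : Finset V} (hs : X.IsClique (s : Set V))
    (hcard : k ≤ s.card + 1) : (ColoringComplex k X).Colorable (s.card + 1) := by
  simpa using (cliqueColoring hs hcard).colorable

end ColoringComplex

end

theorem coloringComplex_colorable_general {V : Type*} (k : ℕ) (hk : 1 ≤ k)
    (X : SimpleGraph V)
    (s : Finset V) (hcard : s.card = k - 1) (hclique : X.IsClique ↑s) :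
    ∃ c : Fin k → Set {S : Set V // IsColorClass k X S},
      IsColoring k (ColoringComplex k X) c := by
  have hk' : s.card + 1 = k := by omega
  exact hk' ▸ (ColoringComplex.colorable_card_add_one hclique hk'.ge).exists_isColoring

/-- If `X` is a `k`-colorable graph containing a clique on `k - 1` vertices,
then the `k`-coloring complex `B(X)` is `k`-colorable. -/
theorem coloringComplex_colorable {V : Type*} (k : ℕ) (hk : 1 ≤ k)
    (X : SimpleGraph V)
    (hcol : ∃ c : Fin k → Set V, IsColoring k X c)
    (s : Finset V) (hcard : s.card = k - 1) (hclique : X.IsClique ↑s) :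
    ∃ c : Fin k → Set {S : Set V // IsColorClass k X S},
      IsColoring k (ColoringComplex k X) c :=
  coloringComplex_colorable_general k hk X s hcard hclique
end

section
/- Let G be an edge-reflexive cubic graph without half-edges, let k ≥ 1, and let H be the cubic graph obtained from G by subdividing a single edge of G k times, adding a half-edge at each of the k new subdivision vertices so that H is cubic. Then H is not edge-reflexive. -/
open SimpleGraph

/-- A cubic graph, possibly with half-edges (edges incident with a single
vertex, recorded as edges whose set of ends is a singleton), without parallel
edges: every vertex is incident with exactly three edges. -/
structure CubicGraph (V E : Type*) [DecidableEq V] where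
  ends : E → Finset V
  ends_card : ∀ e, (ends e).card = 1 ∨ (ends e).card = 2
  no_parallel : ∀ e f, (ends e).card = 2 → ends e = ends f → e = f
  cubic : ∀ v : V, ∃ a b c : E, a ≠ b ∧ a ≠ c ∧ b ≠ c ∧
    ∀ f : E, v ∈ ends f ↔ f = a ∨ f = b ∨ f = c

/-- The line graph of a cubic graph: its vertices are the edges of `G`
(including half-edges), two of them adjacent when they share an endpoint. -/
def lineGraph {V E : Type*} [DecidableEq V] (G : CubicGraph V E) : SimpleGraph E where
  Adj e f := e ≠ f ∧ (G.ends e ∩ G.ends f).Nonempty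
  symm := by constructor; rintro e f ⟨hne, hint⟩; exact ⟨hne.symm, by rwa [Finset.inter_comm]⟩
  loopless := by constructor; rintro e ⟨hne, -⟩; exact hne rfl

/-- A cubic graph is edge-reflexive if its line graph is reflexive for
3-colorings. -/
def EdgeReflexive {V E : Type*} [DecidableEq V] (G : CubicGraph V E) : Prop :=
  IsReflexive 3 (lineGraph G)

/-- A cubic graph is edge-colorful if its line graph is colorful for
3-colorings. -/
def EdgeColorful {V E : Type*} [DecidableEq V] (G : CubicGraph V E) : Prop :=
  Colorful 3 (lineGraph G)

/-- The underlying simple graph of a cubic graph: two vertices are adjacent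
when some (full) edge joins them. -/
def underlying {V E : Type*} [DecidableEq V] (G : CubicGraph V E) : SimpleGraph V where
  Adj u w := u ≠ w ∧ ∃ e, G.ends e = {u, w}
  symm := by constructor; rintro u w ⟨hne, e, he⟩; exact ⟨hne.symm, e, by rwa [Finset.pair_comm]⟩
  loopless := by constructor; rintro u ⟨hne, -⟩; exact hne rfl

/-! In a 3-coloring of the line graph of a cubic graph every color class is a perfect matching.
Color the line graph of `H`. If the last path edge `x_{k-1} b` were not in the color class of the
edge `a x₀`, the edges of `G` in that class would match the vertices of `G` other than `a`
perfectly, which is impossible since a cubic graph without half-edges has an even number of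
vertices. So `a x₀` and `x_{k-1} b` always share their color, `L(H)` is not colorful, and hence not
reflexive. -/

open Finset

theorem IsColoring.mem_iff_eq {V : Type*} {k : ℕ} {X : SimpleGraph V} {c : Fin k → Set V}
    (hc : IsColoring k X c) {v : V} {i j : Fin k} (hi : v ∈ c i) : v ∈ c j ↔ j = i :=
  ⟨fun hj => (hc.1 v).unique hj hi, fun h => h ▸ hi⟩

theorem IsReflexive.colorful {V : Type*} {k : ℕ} {X : SimpleGraph V} (h : IsReflexive k X) :
    Colorful k X := by
  obtain ⟨f, hf⟩ := h
  intro x y hxy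
  have hphi : phi k X x ≠ phi k X y := fun hxy' =>
    hxy (f.injective (Subtype.ext (by rw [hf, hf, hxy'])))
  obtain ⟨C, hC⟩ : ∃ C : {S : Set V // IsColorClass k X S}, ¬ (x ∈ C.1 ↔ y ∈ C.1) := by
    by_contra! hall
    exact hphi (Set.ext hall)
  obtain ⟨c, hc, l, hl⟩ := C.2
  obtain ⟨i, hi, -⟩ := hc.1 x
  obtain ⟨j, hj, -⟩ := hc.1 y
  refine ⟨c, hc, i, j, fun hij => hC ?_, hi, hj⟩
  rw [← hl, hc.mem_iff_eq hi, hc.mem_iff_eq hj, hij]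

namespace CubicGraph

variable {V E : Type*} [DecidableEq V] {G : CubicGraph V E}

theorem card_filter_mem_ends [Fintype E] (G : CubicGraph V E) (v : V) :
    #{f | v ∈ G.ends f} = 3 := by
  classical
  obtain ⟨α, β, γ, hαβ, hαγ, hβγ, hiff⟩ := G.cubic v
  have hinc : ({f | v ∈ G.ends f} : Finset E) = {α, β, γ} := by ext f; simp [hiff]
  rw [hinc, card_eq_three]
  exact ⟨α, β, γ, hαβ, hαγ, hβγ, rfl⟩

theorem even_card_of_card_ends_eq_two [Fintype V] [Fintype E]
    (hfull : ∀ f, #(G.ends f) = 2) : Even (Fintype.card V) := by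
  have hcount : Fintype.card V * 3 = Fintype.card E * 2 :=
    card_mul_eq_card_mul (fun v f => v ∈ G.ends f)
      (fun v _ => by simpa [bipartiteAbove] using G.card_filter_mem_ends v)
      (fun f _ => by simpa [bipartiteBelow] using hfull f)
  have : Even (Fintype.card V * 3) := hcount ▸ even_two.mul_left _
  exact (Nat.even_mul.1 this).resolve_right (by decide)

theorem even_card_biUnion_ends {M : Finset E} (hfull : ∀ f ∈ M, #(G.ends f) = 2)
    (hM : (M : Set E).PairwiseDisjoint G.ends) : Even #(M.biUnion G.ends) := by
  rw [card_biUnion hM, sum_congr rfl hfull, sum_const, smul_eq_mul]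
  exact even_two.mul_left _

variable {c : Fin 3 → Set E}

theorem eq_of_mem_colorClass (hc : IsColoring 3 (lineGraph G) c) {i : Fin 3} {f g : E} {v : V}
    (hf : f ∈ c i) (hg : g ∈ c i) (hvf : v ∈ G.ends f) (hvg : v ∈ G.ends g) : f = g := by
  by_contra hfg
  exact hc.2 i f hf g hg ⟨hfg, v, mem_inter.2 ⟨hvf, hvg⟩⟩

theorem exists_mem_colorClass (hc : IsColoring 3 (lineGraph G) c) (i : Fin 3) (v : V) :
    ∃ f ∈ c i, v ∈ G.ends f := by
  obtain ⟨α, β, γ, hαβ, hαγ, hβγ, hiff⟩ := G.cubic v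
  obtain ⟨iα, hα, -⟩ := hc.1 α
  obtain ⟨iβ, hβ, -⟩ := hc.1 β
  obtain ⟨iγ, hγ, -⟩ := hc.1 γ
  have hvα : v ∈ G.ends α := (hiff α).2 (by simp)
  have hvβ : v ∈ G.ends β := (hiff β).2 (by simp)
  have hvγ : v ∈ G.ends γ := (hiff γ).2 (by simp)
  -- the three edges at `v` get three distinct colors, hence all of them
  have hcolors : ∀ i x y z : Fin 3, x ≠ y → x ≠ z → y ≠ z → i = x ∨ i = y ∨ i = z := by decide
  rcases hcolors i iα iβ iγ
    (fun h => hαβ (eq_of_mem_colorClass hc hα (h ▸ hβ) hvα hvβ))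
    (fun h => hαγ (eq_of_mem_colorClass hc hα (h ▸ hγ) hvα hvγ))
    (fun h => hβγ (eq_of_mem_colorClass hc hβ (h ▸ hγ) hvβ hvγ)) with rfl | rfl | rfl
  exacts [⟨α, hα, hvα⟩, ⟨β, hβ, hvβ⟩, ⟨γ, hγ, hvγ⟩]

end CubicGraph

section Subdivision

/-- `H` arises from `G` by replacing the edge `e` by a path `a x₀ … x_{k-1} b` and attaching a
half-edge at each `xᵢ`: the edge `inl e` of `H` is `a x₀`, `inr (inl i)` is `xᵢ xᵢ₊₁` (and
`x_{k-1} b` for the last `i`), and `inr (inr i)` is the half-edge at `xᵢ`. -/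
def IsEdgeSubdivision {V E : Type*} [DecidableEq V] [DecidableEq E] (G : CubicGraph V E)
    (e : E) (a b : V) {k : ℕ} (hk : 0 < k) (H : CubicGraph (V ⊕ Fin k) (E ⊕ (Fin k ⊕ Fin k))) :
    Prop :=
  ∀ f : E ⊕ (Fin k ⊕ Fin k), H.ends f = Sum.elim
    (fun f' : E => if f' = e
      then ({Sum.inl a, Sum.inr (⟨0, hk⟩ : Fin k)} : Finset (V ⊕ Fin k))
      else (G.ends f').image Sum.inl)
    (Sum.elim
      (fun i : Fin k => if h : (i : ℕ) + 1 < k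
        then ({Sum.inr i, Sum.inr (⟨(i : ℕ) + 1, h⟩ : Fin k)} : Finset (V ⊕ Fin k))
        else {Sum.inr i, Sum.inl b})
      (fun i : Fin k => ({Sum.inr i} : Finset (V ⊕ Fin k)))) f

variable {V E : Type*} [DecidableEq V] [DecidableEq E] {G : CubicGraph V E} {e : E} {a b : V}
  {k : ℕ} {hk : 0 < k} {H : CubicGraph (V ⊕ Fin k) (E ⊕ (Fin k ⊕ Fin k))}

namespace IsEdgeSubdivision

theorem inl_mem_ends_inl_self (hH : IsEdgeSubdivision G e a b hk H) {v : V} :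
    Sum.inl v ∈ H.ends (Sum.inl e) ↔ v = a := by
  rw [hH]
  simp

theorem inl_mem_ends_inl (hH : IsEdgeSubdivision G e a b hk H) {f : E} (hf : f ≠ e) {v : V} :
    Sum.inl v ∈ H.ends (Sum.inl f) ↔ v ∈ G.ends f := by
  rw [hH]
  simp [hf]

theorem eq_last_of_inl_mem_ends_inr (hH : IsEdgeSubdivision G e a b hk H) {j : Fin k ⊕ Fin k}
    {v : V} (hv : Sum.inl v ∈ H.ends (Sum.inr j)) :
    j = Sum.inl ⟨k - 1, Nat.sub_one_lt_of_lt hk⟩ := by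
  rw [hH] at hv
  rcases j with i | i
  · by_cases hi : (i : ℕ) + 1 < k
    · simp [hi] at hv
    · exact congrArg Sum.inl (Fin.ext (by simp only; omega))
  · simp at hv

theorem mem_colorClass_last [Fintype V] [Fintype E] (hH : IsEdgeSubdivision G e a b hk H)
    (hfull : ∀ f, #(G.ends f) = 2) {c : Fin 3 → Set (E ⊕ (Fin k ⊕ Fin k))}
    (hc : IsColoring 3 (lineGraph H) c) {i : Fin 3} (hi : Sum.inl e ∈ c i) :
    Sum.inr (Sum.inl ⟨k - 1, Nat.sub_one_lt_of_lt hk⟩) ∈ c i := by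
  classical
  by_contra hlast
  set M : Finset E := {f | f ≠ e ∧ Sum.inl f ∈ c i}
  have hM : (M : Set E).PairwiseDisjoint G.ends := by
    intro f hf g hg hfg
    simp only [M, coe_filter, mem_univ, true_and, Set.mem_ofPred_eq] at hf hg
    refine disjoint_left.2 fun v hvf hvg => hfg (Sum.inl.inj (β := Fin k ⊕ Fin k) ?_)
    exact CubicGraph.eq_of_mem_colorClass hc hf.2 hg.2
      ((hH.inl_mem_ends_inl hf.1).2 hvf) ((hH.inl_mem_ends_inl hg.1).2 hvg)
  have hcover : M.biUnion G.ends = univ.erase a := by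
    ext v
    simp only [M, mem_biUnion, mem_filter, mem_univ, true_and,
      mem_erase, and_true]
    constructor
    · rintro ⟨f, ⟨hfe, hf⟩, hv⟩ rfl
      exact hfe (Sum.inl.inj (CubicGraph.eq_of_mem_colorClass hc hf hi
        ((hH.inl_mem_ends_inl hfe).2 hv) (hH.inl_mem_ends_inl_self.2 rfl)))
    · intro hva
      obtain ⟨g, hg, hvg⟩ := CubicGraph.exists_mem_colorClass hc i (Sum.inl v)
      rcases g with f | j
      · have hfe : f ≠ e := by rintro rfl; exact hva (hH.inl_mem_ends_inl_self.1 hvg)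
        exact ⟨f, ⟨hfe, hg⟩, (hH.inl_mem_ends_inl hfe).1 hvg⟩
      · obtain rfl := hH.eq_last_of_inl_mem_ends_inr hvg
        exact absurd hg hlast
  have hcard := CubicGraph.even_card_biUnion_ends (fun f _ => hfull f) hM
  rw [hcover, card_erase_of_mem (mem_univ a), card_univ] at hcard
  have hpos : 0 < Fintype.card V := Fintype.card_pos_iff.2 ⟨a⟩
  obtain ⟨m, hm⟩ := CubicGraph.even_card_of_card_ends_eq_two hfull
  obtain ⟨n, hn⟩ := hcard
  omega

theorem not_edgeColorful [Fintype V] [Fintype E] (hH : IsEdgeSubdivision G e a b hk H)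
    (hfull : ∀ f, #(G.ends f) = 2) : ¬ EdgeColorful H := by
  intro hcol
  obtain ⟨c, hc, i, j, hij, hi, hj⟩ := hcol (Sum.inl e) _ Sum.inl_ne_inr
  exact hij ((hc.mem_iff_eq hj).1 (hH.mem_colorClass_last hfull hc hi))

end IsEdgeSubdivision

end Subdivision

theorem subdivided_not_edgeReflexive_general {V E : Type*} [DecidableEq V] [DecidableEq E] [Fintype V] [Fintype E]
    (G : CubicGraph V E) (hfull : ∀ f : E, (G.ends f).card = 2)
    (k : ℕ) (hk : 0 < k)
    (e : E) (a b : V)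
    (H : CubicGraph (V ⊕ Fin k) (E ⊕ (Fin k ⊕ Fin k)))
    (hH : ∀ f : E ⊕ (Fin k ⊕ Fin k), H.ends f = Sum.elim
      (fun f' : E => if f' = e
        then ({Sum.inl a, Sum.inr (⟨0, hk⟩ : Fin k)} : Finset (V ⊕ Fin k))
        else (G.ends f').image Sum.inl)
      (Sum.elim
        (fun i : Fin k => if h : (i : ℕ) + 1 < k
          then ({Sum.inr i, Sum.inr (⟨(i : ℕ) + 1, h⟩ : Fin k)} : Finset (V ⊕ Fin k))
          else {Sum.inr i, Sum.inl b})
        (fun i : Fin k => ({Sum.inr i} : Finset (V ⊕ Fin k)))) f) :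
    ¬ EdgeReflexive H := fun hH' =>
  IsEdgeSubdivision.not_edgeColorful hH hfull (IsReflexive.colorful hH')

/-- If `G` is an edge-reflexive cubic graph without half-edges and `H` is
obtained from `G` by subdividing a single edge `e = ab` of `G` `k ≥ 1` times
(creating new vertices `x₀, …, x_{k-1}` forming a path from `a` to `b`, with a
new half-edge at each `xᵢ`), then `H` is not edge-reflexive. -/
theorem subdivided_not_edgeReflexive {V E : Type*} [DecidableEq V] [DecidableEq E] [Fintype V] [Fintype E]
    (G : CubicGraph V E) (hfull : ∀ f : E, (G.ends f).card = 2)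
    (hG : EdgeReflexive G)
    (k : ℕ) (hk : 0 < k)
    (e : E) (a b : V) (hab : a ≠ b) (he : G.ends e = {a, b})
    (H : CubicGraph (V ⊕ Fin k) (E ⊕ (Fin k ⊕ Fin k)))
    (hH : ∀ f : E ⊕ (Fin k ⊕ Fin k), H.ends f = Sum.elim
      (fun f' : E => if f' = e
        then ({Sum.inl a, Sum.inr (⟨0, hk⟩ : Fin k)} : Finset (V ⊕ Fin k))
        else (G.ends f').image Sum.inl)
      (Sum.elim
        (fun i : Fin k => if h : (i : ℕ) + 1 < k
          then ({Sum.inr i, Sum.inr (⟨(i : ℕ) + 1, h⟩ : Fin k)} : Finset (V ⊕ Fin k))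
          else {Sum.inr i, Sum.inl b})
        (fun i : Fin k => ({Sum.inr i} : Finset (V ⊕ Fin k)))) f) :
    ¬ EdgeReflexive H :=
  subdivided_not_edgeReflexive_general G hfull k hk e a b H hH
end
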